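/- Let T > 0, let k : [0,T] → ℝ be absolutely continuous with k(t) = k(0) + ∫₀^t k̇(s) ds, k̇ ∈ L₁((0,T)), and assume k is nonnegative and nonincreasing. Let H ∈ C¹(ℝ) be convex with H(0) ≤ 0, and let u : [0,T] → ℝ be continuous. Then for almost every t ∈ (0,T): H'(u(t)) · (d/dt)(k*u)(t) ≥ (d/dt)(k*(H∘u))(t). -/

import Mathlib

/-!
Writing `k x = k 0 + ∫₀ˣ k̇`, Fubini's theorem turns `k * f` into the primitive of
`k 0 · f + k̇ * f`, so by Lebesgue's differentiation theorem `(d/dt)(k * f) = k 0 f + k̇ * f`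
almost everywhere. Fix `y = u t`. The tangent line of `H` at `y` gives
`H' y · u s - H (u s) ≤ H' y · y - H y =: c`, and `c ≥ -H 0 ≥ 0`. Since `k̇ ≤ 0` a.e.,
`H' y · (d/dt)(k * u) - (d/dt)(k * (H ∘ u)) = k 0 c + k̇ * (H' y · u - H ∘ u)
  ≥ k 0 c + (k t - k 0) c = k t c ≥ 0`.
-/

open MeasureTheory Set Filter
open scoped Convolution

theorem ConvexOn.add_mul_sub_le_of_hasDerivAt {S : Set ℝ} {f : ℝ → ℝ} {f' x y : ℝ}
    (hf : ConvexOn ℝ S f) (hx : x ∈ S) (hy : y ∈ S) (hf' : HasDerivAt f f' y) :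
    f y + f' * (x - y) ≤ f x := by
  rcases lt_trichotomy x y with hxy | rfl | hxy
  · have := hf.slope_le_of_hasDerivAt hx hy hxy hf'
    rw [slope_def_field, div_le_iff₀ (sub_pos.2 hxy)] at this
    linarith
  · simp
  · have := hf.le_slope_of_hasDerivAt hy hx hxy hf'
    rw [slope_def_field, le_div_iff₀ (sub_pos.2 hxy)] at this
    linarith

section Primitive

variable {F g : ℝ → ℝ} {b c : ℝ}

theorem ae_hasDerivAt_of_eq_add_integral (hg : IntervalIntegrable g volume 0 b)
    (hF : ∀ x ∈ Icc 0 b, F x = c + ∫ r in (0:ℝ)..x, g r) :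
    ∀ᵐ t, t ∈ Ioo 0 b → HasDerivAt F (g t) t := by
  filter_upwards [hg.ae_hasDerivAt_integral] with t hderiv ht
  have ht' : t ∈ uIcc 0 b := by
    rw [uIcc_of_le (ht.1.le.trans ht.2.le)]
    exact Ioo_subset_Icc_self ht
  refine ((hderiv ht' 0 left_mem_uIcc).const_add c).congr_of_eventuallyEq ?_
  filter_upwards [Icc_mem_nhds ht.1 ht.2] with x hx using hF x hx

theorem ae_nonpos_of_antitoneOn_of_eq_add_integral (hg : IntervalIntegrable g volume 0 b)
    (hF : ∀ x ∈ Icc 0 b, F x = c + ∫ r in (0:ℝ)..x, g r) (hanti : AntitoneOn F (Icc 0 b)) :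
    ∀ᵐ t, t ∈ Ioo 0 b → g t ≤ 0 := by
  filter_upwards [ae_hasDerivAt_of_eq_add_integral hg hF] with t hderiv ht
  rw [← (hderiv ht).deriv, ← derivWithin_of_mem_nhds (Icc_mem_nhds ht.1 ht.2)]
  exact hanti.derivWithin_nonpos

end Primitive

noncomputable def halfLineConv (g f : ℝ → ℝ) (τ : ℝ) : ℝ :=
  ∫ s in (0:ℝ)..τ, g (τ - s) * f s

section HalfLineConv

variable {k g f : ℝ → ℝ}

theorem halfLineConv_eq_convolution_indicator {a σ : ℝ} (hσ : σ ∈ Icc 0 a) :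
    halfLineConv g f σ =
      ((Ioc 0 a).indicator f ⋆[ContinuousLinearMap.mul ℝ ℝ] (Ioc 0 a).indicator g) σ := by
  rw [halfLineConv, intervalIntegral.integral_of_le hσ.1, integral_Ioc_eq_integral_Ioo,
    ← integral_indicator measurableSet_Ioo, convolution_def]
  congr 1 with s
  simp only [indicator_apply, mem_Ioo, mem_Ioc, ContinuousLinearMap.mul_apply']
  split_ifs <;> grind

theorem intervalIntegrable_halfLineConv {b : ℝ} (hb : 0 ≤ b)
    (hg : IntervalIntegrable g volume 0 b) (hf : IntervalIntegrable f volume 0 b) :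
    IntervalIntegrable (halfLineConv g f) volume 0 b := by
  rw [intervalIntegrable_iff_integrableOn_Ioc_of_le hb] at hg hf ⊢
  have hconv := ((integrable_indicator_iff measurableSet_Ioc).2 hf).integrable_convolution
    (ContinuousLinearMap.mul ℝ ℝ) ((integrable_indicator_iff measurableSet_Ioc).2 hg)
  refine hconv.integrableOn.congr_fun (fun σ hσ => ?_) measurableSet_Ioc
  exact (halfLineConv_eq_convolution_indicator (Ioc_subset_Icc_self hσ)).symm

theorem setIntegral_Ioc_indicator_comp_sub {τ s : ℝ} (hs : s ∈ Ioc 0 τ) :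
    ∫ σ in Ioc 0 τ, (Ioc 0 τ).indicator g (σ - s) = ∫ r in (0:ℝ)..τ - s, g r := by
  obtain ⟨hs₀, hsτ⟩ := hs
  rw [← intervalIntegral.integral_of_le (hs₀.le.trans hsτ),
    intervalIntegral.integral_comp_sub_right, intervalIntegral.integral_of_le (by linarith),
    setIntegral_indicator measurableSet_Ioc, Ioc_inter_Ioc, zero_sub,
    max_eq_right (neg_nonpos.2 hs₀.le), min_eq_left (by linarith),
    intervalIntegral.integral_of_le (by linarith)]

theorem integral_halfLineConv {τ : ℝ} (hτ : 0 ≤ τ)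
    (hg : IntervalIntegrable g volume 0 τ) (hf : IntervalIntegrable f volume 0 τ) :
    ∫ σ in (0:ℝ)..τ, halfLineConv g f σ =
      ∫ s in (0:ℝ)..τ, (∫ r in (0:ℝ)..τ - s, g r) * f s := by
  rw [intervalIntegrable_iff_integrableOn_Ioc_of_le hτ] at hg hf
  have hint : Integrable
      (Function.uncurry fun σ s => (Ioc 0 τ).indicator f s * (Ioc 0 τ).indicator g (σ - s))
      ((volume.restrict (Ioc 0 τ)).prod volume) :=
    (((integrable_indicator_iff measurableSet_Ioc).2 hf).convolution_integrand
      (ContinuousLinearMap.mul ℝ ℝ) ((integrable_indicator_iff measurableSet_Ioc).2 hg)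
      ).mono_measure (Measure.prod_mono Measure.restrict_le_self le_rfl)
  simp_rw [intervalIntegral.integral_of_le hτ]
  calc ∫ σ in Ioc 0 τ, halfLineConv g f σ
      = ∫ σ in Ioc 0 τ, ∫ s, (Ioc 0 τ).indicator f s * (Ioc 0 τ).indicator g (σ - s) :=
        setIntegral_congr_fun measurableSet_Ioc fun σ hσ =>
          halfLineConv_eq_convolution_indicator (Ioc_subset_Icc_self hσ)
    _ = ∫ s, ∫ σ in Ioc 0 τ, (Ioc 0 τ).indicator f s * (Ioc 0 τ).indicator g (σ - s) :=
        integral_integral_swap hint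
    _ = ∫ s in Ioc 0 τ, f s * ∫ σ in Ioc 0 τ, (Ioc 0 τ).indicator g (σ - s) := by
        rw [← integral_indicator measurableSet_Ioc]
        congr 1 with s
        rw [integral_const_mul, indicator_mul_left]
    _ = ∫ s in Ioc 0 τ, (∫ r in (0:ℝ)..τ - s, g r) * f s := by
        refine setIntegral_congr_fun measurableSet_Ioc fun s hs => ?_
        rw [setIntegral_Ioc_indicator_comp_sub hs, mul_comm]

theorem halfLineConv_eq_integral {b τ : ℝ}
    (hg : IntervalIntegrable g volume 0 b) (hf : IntervalIntegrable f volume 0 b)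
    (hk : ∀ x ∈ Icc 0 b, k x = k 0 + ∫ r in (0:ℝ)..x, g r) (hτ : τ ∈ Icc 0 b) :
    halfLineConv k f τ = ∫ σ in (0:ℝ)..τ, (k 0 * f σ + halfLineConv g f σ) := by
  have hsub : uIcc 0 τ ⊆ uIcc 0 b := uIcc_subset_uIcc_left (Icc_subset_uIcc hτ)
  have hgτ := hg.mono_set hsub
  have hfτ := hf.mono_set hsub
  have hprim : ContinuousOn (fun s => ∫ r in (0:ℝ)..τ - s, g r) (uIcc 0 τ) :=
    (intervalIntegral.continuousOn_primitive_interval' hgτ left_mem_uIcc).comp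
      (continuousOn_const.sub continuousOn_id) fun s hs => by
        rw [uIcc_of_le hτ.1] at hs ⊢
        exact ⟨by linarith [hs.2], by linarith [hs.1]⟩
  rw [halfLineConv, intervalIntegral.integral_add (hfτ.const_mul _)
      (intervalIntegrable_halfLineConv hτ.1 hgτ hfτ), intervalIntegral.integral_const_mul,
    integral_halfLineConv hτ.1 hgτ hfτ, ← intervalIntegral.integral_const_mul,
    ← intervalIntegral.integral_add (hfτ.const_mul _) (hfτ.continuousOn_mul hprim)]
  refine intervalIntegral.integral_congr fun s hs => ?_
  rw [uIcc_of_le hτ.1] at hs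
  simp only [hk (τ - s) ⟨by linarith [hs.2], by linarith [hs.1, hτ.2]⟩]
  ring

theorem ae_hasDerivAt_halfLineConv {b : ℝ} (hb : 0 ≤ b)
    (hg : IntervalIntegrable g volume 0 b) (hf : IntervalIntegrable f volume 0 b)
    (hk : ∀ x ∈ Icc 0 b, k x = k 0 + ∫ r in (0:ℝ)..x, g r) :
    ∀ᵐ t, t ∈ Ioo 0 b → HasDerivAt (halfLineConv k f) (k 0 * f t + halfLineConv g f t) t :=
  ae_hasDerivAt_of_eq_add_integral (c := 0)
    ((hf.const_mul _).add (intervalIntegrable_halfLineConv hb hg hf)) fun τ hτ => by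
      rw [zero_add]
      exact halfLineConv_eq_integral hg hf hk hτ

theorem integral_mul_le_halfLineConv {t M : ℝ} (ht : 0 ≤ t)
    (hg : IntervalIntegrable g volume 0 t) (hf : ContinuousOn f (Icc 0 t))
    (hg_nonpos : ∀ᵐ x, x ∈ Ioo 0 t → g x ≤ 0) (hfM : ∀ s ∈ Icc 0 t, f s ≤ M) :
    (∫ r in (0:ℝ)..t, g r) * M ≤ halfLineConv g f t := by
  have hreflect : halfLineConv g f t = ∫ r in (0:ℝ)..t, g r * f (t - r) := by
    rw [halfLineConv]
    simpa only [sub_sub_cancel, sub_self, sub_zero] using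
      intervalIntegral.integral_comp_sub_left (a := 0) (b := t) (fun r => g r * f (t - r)) t
  have hf' : ContinuousOn (fun r => f (t - r)) (uIcc 0 t) :=
    hf.comp (continuousOn_const.sub continuousOn_id) fun r hr => by
      rw [uIcc_of_le ht] at hr
      exact ⟨by linarith [hr.2], by linarith [hr.1]⟩
  rw [hreflect, ← intervalIntegral.integral_mul_const]
  refine intervalIntegral.integral_mono_ae_restrict ht (hg.mul_const M)
    (hg.mul_continuousOn hf') ?_
  rw [EventuallyLE, ← Measure.restrict_congr_set Ioo_ae_eq_Icc,
    ae_restrict_iff' measurableSet_Ioo]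
  filter_upwards [hg_nonpos] with r hr hrt
  exact mul_le_mul_of_nonpos_left (hfM _ ⟨by linarith [hrt.2], by linarith [hrt.1]⟩) (hr hrt)

theorem mul_add_halfLineConv_le {u H H' : ℝ → ℝ} {t : ℝ} (ht : 0 ≤ t)
    (hkt : k t = k 0 + ∫ r in (0:ℝ)..t, g r) (hkt_nonneg : 0 ≤ k t)
    (hg : IntervalIntegrable g volume 0 t) (hg_nonpos : ∀ᵐ x, x ∈ Ioo 0 t → g x ≤ 0)
    (hu : ContinuousOn u (Icc 0 t)) (hH : ∀ y, HasDerivAt H (H' y) y)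
    (hH_conv : ConvexOn ℝ univ H) (hH0 : H 0 ≤ 0) :
    k 0 * H (u t) + halfLineConv g (fun s => H (u s)) t ≤
      H' (u t) * (k 0 * u t + halfLineConv g u t) := by
  set y := u t
  have hHu : ContinuousOn (fun s => H (u s)) (Icc 0 t) :=
    (continuous_iff_continuousAt.2 fun x => (hH x).continuousAt).comp_continuousOn hu
  have htangent (x : ℝ) : H y + H' y * (x - y) ≤ H x :=
    hH_conv.add_mul_sub_le_of_hasDerivAt (mem_univ x) (mem_univ y) (hH y)
  have hc : 0 ≤ H' y * y - H y := by linarith [htangent 0]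
  have hbound := integral_mul_le_halfLineConv (f := fun s => H' y * u s - H (u s))
    (M := H' y * y - H y) ht hg ((continuousOn_const.mul hu).sub hHu) hg_nonpos
    fun s _ => by linarith [htangent (u s)]
  have hreflect : IntervalIntegrable (fun s => g (t - s)) volume 0 t := by
    simpa only [sub_zero, sub_self] using (hg.comp_sub_left t).symm
  have hlin : halfLineConv g (fun s => H' y * u s - H (u s)) t =
      H' y * halfLineConv g u t - halfLineConv g (fun s => H (u s)) t := by
    rw [halfLineConv, halfLineConv, halfLineConv, ← intervalIntegral.integral_const_mul,
      ← intervalIntegral.integral_sub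
        ((hreflect.mul_continuousOn (hu.mono (uIcc_of_le ht).subset)).const_mul _)
        (hreflect.mul_continuousOn (hHu.mono (uIcc_of_le ht).subset))]
    congr 1 with s
    ring
  have hk_split : (∫ r in (0:ℝ)..t, g r) * (H' y * y - H y)
      = k t * (H' y * y - H y) - k 0 * (H' y * y - H y) := by
    rw [hkt]
    ring
  linarith [mul_nonneg hkt_nonneg hc]

end HalfLineConv

theorem fundamental_inequality_general (T : ℝ) (hT : 0 < T)
    (k kdot u H H' : ℝ → ℝ)
    (hkdot : IntegrableOn kdot (Ioo 0 T))
    (hk : ∀ t ∈ Icc (0:ℝ) T, k t = k 0 + ∫ s in (0:ℝ)..t, kdot s)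
    (hk_nonneg : ∀ t ∈ Icc (0:ℝ) T, 0 ≤ k t)
    (hk_anti : AntitoneOn k (Icc 0 T))
    (hu : ContinuousOn u (Icc 0 T))
    (hH : ∀ y : ℝ, HasDerivAt H (H' y) y)
    (hH_conv : ConvexOn ℝ Set.univ H)
    (hH0 : H 0 ≤ 0) :
    ∀ᵐ t : ℝ, t ∈ Ioo 0 T →
      ∃ d₁ d₂ : ℝ,
        HasDerivAt (fun τ => ∫ s in (0:ℝ)..τ, k (τ - s) * u s) d₁ t ∧
        HasDerivAt (fun τ => ∫ s in (0:ℝ)..τ, k (τ - s) * H (u s)) d₂ t ∧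
        H' (u t) * d₁ ≥ d₂ := by
  have hkdot' : IntervalIntegrable kdot volume 0 T :=
    (intervalIntegrable_iff_integrableOn_Ioo_of_le hT.le).2 hkdot
  have hHu : ContinuousOn (fun s => H (u s)) (Icc 0 T) :=
    (continuous_iff_continuousAt.2 fun y => (hH y).continuousAt).comp_continuousOn hu
  have hkdot_nonpos := ae_nonpos_of_antitoneOn_of_eq_add_integral hkdot' hk hk_anti
  filter_upwards [ae_hasDerivAt_halfLineConv hT.le hkdot' (hu.intervalIntegrable_of_Icc hT.le) hk,
    ae_hasDerivAt_halfLineConv hT.le hkdot' (hHu.intervalIntegrable_of_Icc hT.le) hk]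
    with t hd₁ hd₂ ht
  have htT : t ∈ Icc 0 T := Ioo_subset_Icc_self ht
  refine ⟨_, _, hd₁ ht, hd₂ ht, ?_⟩
  refine mul_add_halfLineConv_le ht.1.le (hk t htT) (hk_nonneg t htT)
    (hkdot'.mono_set (uIcc_subset_uIcc_left (Icc_subset_uIcc htT))) ?_
    (hu.mono (Icc_subset_Icc_right ht.2.le)) hH hH_conv hH0
  filter_upwards [hkdot_nonpos] with x hx hxt using hx (Ioo_subset_Ioo_right ht.2.le hxt)

/-- Convexity inequality derived from the fundamental identity (18): for
`k ∈ H¹₁([0,T])` nonnegative and nonincreasing, `H ∈ C¹(ℝ)` convex with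
`H(0) ≤ 0`, and `u` continuous, for a.e. `t ∈ (0,T)` one has
`H'(u(t)) (d/dt)(k*u)(t) ≥ (d/dt)(k*(H∘u))(t)`. -/
theorem fundamental_inequality (T : ℝ) (hT : 0 < T)
    (k kdot u H H' : ℝ → ℝ)
    (hkdot : IntegrableOn kdot (Ioo 0 T))
    (hk : ∀ t ∈ Icc (0:ℝ) T, k t = k 0 + ∫ s in (0:ℝ)..t, kdot s)
    (hk_nonneg : ∀ t ∈ Icc (0:ℝ) T, 0 ≤ k t)
    (hk_anti : AntitoneOn k (Icc 0 T))
    (hu : ContinuousOn u (Icc 0 T))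
    (hH : ∀ y : ℝ, HasDerivAt H (H' y) y)
    (hH' : Continuous H')
    (hH_conv : ConvexOn ℝ Set.univ H)
    (hH0 : H 0 ≤ 0) :
    ∀ᵐ t : ℝ, t ∈ Ioo 0 T →
      ∃ d₁ d₂ : ℝ,
        HasDerivAt (fun τ => ∫ s in (0:ℝ)..τ, k (τ - s) * u s) d₁ t ∧
        HasDerivAt (fun τ => ∫ s in (0:ℝ)..τ, k (τ - s) * H (u s)) d₂ t ∧
        H' (u t) * d₁ ≥ d₂ :=
  fundamental_inequality_general T hT k kdot u H H' hkdot hk hk_nonneg hk_anti hu hH hH_conv hH0
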